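/- Let G be a finite tree (a finite connected acyclic simple graph). Then the following are equivalent: (1) for every function ε : V(G) → {+, −}, every connected component of the ε-subgraph G_ε is isomorphic to a simply laced Dynkin graph (of type A_n, D_n, E_6, E_7, or E_8); (2) G itself is isomorphic to a simply laced Dynkin graph. -/

import Mathlib

/-- The ε-subgraph of `G`: the spanning subgraph whose edges are the edges of `G`
whose two endpoints receive different values under `ε`. -/
def epsSubgraph {V : Type*} (G : SimpleGraph V) (ε : V → Bool) : SimpleGraph V where
  Adj u v := G.Adj u v ∧ ε u ≠ ε v
  symm := ⟨fun _ _ h => ⟨h.1.symm, h.2.symm⟩⟩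
  loopless := ⟨fun v h => G.loopless.irrefl v h.1⟩

/-- The Dynkin graph `D_n` (for `n ≥ 4`): a path on `n - 1` vertices `0, 1, …, n-2`
together with one extra leaf `n-1` attached to the second vertex `1` of the path. -/
def dynkinD (n : ℕ) : SimpleGraph (Fin n) :=
  SimpleGraph.fromRel (fun i j =>
    (i.val + 1 = j.val ∧ j.val ≤ n - 2) ∨ (i.val = 1 ∧ j.val = n - 1))

/-- The Dynkin graph `E_n` (for `n = 6, 7, 8`): a path on `n - 1` vertices
`0, 1, …, n-2` together with one extra leaf `n-1` attached to the third vertex `2`. -/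
def dynkinE (n : ℕ) : SimpleGraph (Fin n) :=
  SimpleGraph.fromRel (fun i j =>
    (i.val + 1 = j.val ∧ j.val ≤ n - 2) ∨ (i.val = 2 ∧ j.val = n - 1))

/-- A graph is a simply laced Dynkin graph if it is isomorphic to `A_n` (`n ≥ 1`),
`D_n` (`n ≥ 4`), `E_6`, `E_7` or `E_8`. -/
def IsDynkin {W : Type*} (H : SimpleGraph W) : Prop :=
  (∃ n : ℕ, 1 ≤ n ∧ Nonempty (H ≃g SimpleGraph.pathGraph n)) ∨
  (∃ n : ℕ, 4 ≤ n ∧ Nonempty (H ≃g dynkinD n)) ∨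
  Nonempty (H ≃g dynkinE 6) ∨ Nonempty (H ≃g dynkinE 7) ∨ Nonempty (H ≃g dynkinE 8)

/-!
A tree is bipartite, so for a proper 2-colouring `ε` the graph `G_ε` is `G` itself. Conversely,
since `G` is acyclic, an edge of `G` between two vertices of one component of `G_ε` cannot be
missing from `G_ε` (it would close a cycle), so the components of `G_ε` are connected induced
subgraphs of `G`. Every Dynkin graph is a path with one pendant vertex, and a connected induced
subgraph of such a graph is a subpath or again a path with a pendant vertex whose two arms beside
the attaching vertex have not grown. Such a graph is Dynkin as soon as its shorter arm has
length at most 1, or length 2 and at most 8 vertices.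
-/

open SimpleGraph

theorem SimpleGraph.Walk.exists_mem_support_apply_eq {V : Type*} {G : SimpleGraph V} (f : V → ℕ)
    (hf : ∀ ⦃u v⦄, G.Adj u v → f v ≤ f u + 1) {u v : V} (p : G.Walk u v) {c : ℕ}
    (hu : f u ≤ c) (hv : c ≤ f v) : ∃ x ∈ p.support, f x = c := by
  induction p with
  | nil => exact ⟨_, Walk.start_mem_support _, le_antisymm hu hv⟩
  | @cons a b _ h p ih =>
    rcases hu.eq_or_lt with hu | hu
    · exact ⟨a, Walk.start_mem_support _, hu⟩
    · obtain ⟨x, hx, rfl⟩ := ih (by have := hf h; omega) hv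
      exact ⟨x, List.mem_cons_of_mem _ hx, rfl⟩

theorem SimpleGraph.IsAcyclic.adj_of_le_of_reachable {V : Type*} {G H : SimpleGraph V}
    (hG : G.IsAcyclic) (hle : H ≤ G) {u v : V} (hadj : G.Adj u v) (hreach : H.Reachable u v) :
    H.Adj u v := by
  by_contra hH
  refine isBridge_iff.mp (isAcyclic_iff_forall_adj_isBridge.mp hG hadj)
    (hreach.mono fun x y hxy ↦ ?_)
  rw [deleteEdges_adj, Set.mem_singleton_iff, Sym2.eq_iff]
  refine ⟨hle hxy, ?_⟩
  rintro (⟨rfl, rfl⟩ | ⟨rfl, rfl⟩)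
  exacts [hH hxy, hH hxy.symm]

theorem IsDynkin.of_iso {W W' : Type*} {H : SimpleGraph W} {H' : SimpleGraph W'}
    (e : H ≃g H') (h : IsDynkin H') : IsDynkin H := by
  rcases h with ⟨n, hn, hf⟩ | ⟨n, hn, hf⟩ | hf | hf | hf
  · exact Or.inl ⟨n, hn, hf.map e.trans⟩
  · exact Or.inr (Or.inl ⟨n, hn, hf.map e.trans⟩)
  · exact Or.inr (Or.inr (Or.inl (hf.map e.trans)))
  · exact Or.inr (Or.inr (Or.inr (Or.inl (hf.map e.trans))))
  · exact Or.inr (Or.inr (Or.inr (Or.inr (hf.map e.trans))))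

theorem isDynkin_of_subsingleton {W : Type*} [Subsingleton W] [Nonempty W] (H : SimpleGraph W) :
    IsDynkin H := by
  refine Or.inl ⟨1, le_rfl, ⟨⟨equivOfSubsingletonOfSubsingleton (fun _ ↦ 0)
    (fun _ ↦ Classical.arbitrary W), fun {a b} ↦ ?_⟩⟩⟩
  rw [Subsingleton.elim a b]
  simp

/-- The path `0, …, n - 2` with a pendant vertex `n - 1` attached at `s`: `dynkinD n` and
`dynkinE n` are the cases `s = 1, 2`, and `pathGraph n` is the case `s = n - 2`. -/
def pathWithPendant (n s : ℕ) : SimpleGraph (Fin n) :=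
  SimpleGraph.fromRel (fun i j =>
    (i.val + 1 = j.val ∧ j.val ≤ n - 2) ∨ (i.val = s ∧ j.val = n - 1))

section PathWithPendant

variable {n s : ℕ}

theorem pathWithPendant_adj (hs : s + 2 ≤ n) {u v : Fin n} :
    (pathWithPendant n s).Adj u v ↔
      (u.val + 1 = v.val ∧ v.val ≤ n - 2) ∨ (v.val + 1 = u.val ∧ u.val ≤ n - 2) ∨
      (u.val = s ∧ v.val = n - 1) ∨ (v.val = s ∧ u.val = n - 1) := by
  have := u.isLt
  have := v.isLt
  rw [pathWithPendant, fromRel_adj, ne_eq, ← Fin.val_eq_val]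
  constructor <;> intro h <;> omega

theorem pathGraph_eq_pathWithPendant (hn : 2 ≤ n) : pathGraph n = pathWithPendant n (n - 2) := by
  ext u v
  rw [pathGraph_adj, pathWithPendant_adj (by omega)]
  have := u.isLt
  have := v.isLt
  omega

def pathWithPendant.reverseIso (hs : s + 2 ≤ n) :
    pathWithPendant n s ≃g pathWithPendant n (n - 2 - s) where
  toFun i := ⟨if i.val = n - 1 then n - 1 else n - 2 - i.val, by split_ifs <;> omega⟩
  invFun i := ⟨if i.val = n - 1 then n - 1 else n - 2 - i.val, by split_ifs <;> omega⟩
  left_inv i := by ext; have := i.isLt; dsimp only; split_ifs <;> omega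
  right_inv i := by ext; have := i.isLt; dsimp only; split_ifs <;> omega
  map_rel_iff' {u v} := by
    rw [pathWithPendant_adj hs, pathWithPendant_adj (by omega)]
    have := u.isLt
    have := v.isLt
    dsimp only [Equiv.coe_fn_mk]
    split_ifs <;> omega

def pathWithPendant.spineEmbedding (hs : s + 2 ≤ n) (a : ℕ) {m : ℕ} (h : a + m < n) :
    pathGraph m ↪g pathWithPendant n s where
  toFun i := ⟨a + i.val, by omega⟩
  inj' := StrictMono.injective fun i j hij ↦ by
    simp only [Fin.lt_def] at hij ⊢
    omega
  map_rel_iff' {i j} := by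
    rw [pathWithPendant_adj hs, pathGraph_adj]
    simp only [Function.Embedding.coeFn_mk]
    omega

def pathWithPendant.restrictEmbedding (hs : s + 2 ≤ n) {a m : ℕ} (has : a ≤ s)
    (hsm : s + 2 ≤ a + m) (h : a + m ≤ n) :
    pathWithPendant m (s - a) ↪g pathWithPendant n s where
  toFun i := ⟨if i.val = m - 1 then n - 1 else a + i.val, by split_ifs <;> omega⟩
  inj' := StrictMono.injective fun i j hij ↦ by
    have := j.isLt
    simp only [Fin.lt_def] at hij ⊢
    split_ifs <;> omega
  map_rel_iff' {i j} := by
    rw [pathWithPendant_adj hs, pathWithPendant_adj (by omega)]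
    have := i.isLt
    have := j.isLt
    simp only [Function.Embedding.coeFn_mk]
    split_ifs <;> omega

@[simp]
theorem pathWithPendant.restrictEmbedding_apply_val (hs : s + 2 ≤ n) {a m : ℕ} (has : a ≤ s)
    (hsm : s + 2 ≤ a + m) (h : a + m ≤ n) (i : Fin m) :
    (restrictEmbedding hs has hsm h i).val = if i.val = m - 1 then n - 1 else a + i.val :=
  rfl

theorem pathWithPendant.range_spineEmbedding (hs : s + 2 ≤ n) (a : ℕ) {m : ℕ} (h : a + m < n) :
    Set.range (pathWithPendant.spineEmbedding hs a h) = {x | a ≤ x.val ∧ x.val < a + m} := by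
  ext x
  constructor
  · rintro ⟨i, rfl⟩
    exact ⟨Nat.le_add_right _ _, Nat.add_lt_add_left i.isLt a⟩
  · rintro ⟨h1, h2⟩
    exact ⟨⟨x.val - a, by omega⟩, Fin.ext (Nat.add_sub_cancel' h1)⟩

theorem pathWithPendant.range_restrictEmbedding (hs : s + 2 ≤ n) {a m : ℕ} (has : a ≤ s)
    (hsm : s + 2 ≤ a + m) (h : a + m ≤ n) :
    Set.range (pathWithPendant.restrictEmbedding hs has hsm h) =
      {x | x.val = n - 1 ∨ (a ≤ x.val ∧ x.val + 2 ≤ a + m)} := by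
  ext x
  constructor
  · rintro ⟨i, rfl⟩
    have := i.isLt
    simp only [Set.mem_ofPred_eq, pathWithPendant.restrictEmbedding_apply_val]
    split_ifs <;> omega
  · rintro (hx | hx)
    · refine ⟨⟨m - 1, by omega⟩, Fin.ext ?_⟩
      simp [hx]
    · refine ⟨⟨x.val - a, by omega⟩, Fin.ext ?_⟩
      simp only [pathWithPendant.restrictEmbedding_apply_val]
      split_ifs <;> omega

theorem isDynkin_pathWithPendant (hs : s + 2 ≤ n)
    (hdyn : min s (n - 2 - s) ≤ 1 ∨ (min s (n - 2 - s) = 2 ∧ n ≤ 8)) :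
    IsDynkin (pathWithPendant n s) := by
  wlog hle : s ≤ n - 2 - s generalizing s
  · exact IsDynkin.of_iso (pathWithPendant.reverseIso hs) (this (by omega) (by omega) (by omega))
  obtain rfl | rfl | ⟨rfl, hn⟩ : s = 0 ∨ s = 1 ∨ (s = 2 ∧ n ≤ 8) := by omega
  · refine IsDynkin.of_iso (pathWithPendant.reverseIso hs) (Or.inl ⟨n, by omega, ⟨?_⟩⟩)
    rw [pathGraph_eq_pathWithPendant (by omega)]
    exact .refl
  · exact Or.inr (Or.inl ⟨n, by omega, ⟨.refl⟩⟩)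
  · obtain h6 : 6 ≤ n := by omega
    interval_cases n
    exacts [Or.inr (Or.inr (Or.inl ⟨.refl⟩)), Or.inr (Or.inr (Or.inr (Or.inl ⟨.refl⟩))),
      Or.inr (Or.inr (Or.inr (Or.inr ⟨.refl⟩)))]

theorem pathWithPendant.exists_mem_val_eq_of_connected (hs : s + 2 ≤ n) {S : Set (Fin n)}
    (hS : ((pathWithPendant n s).induce S).Connected) (hnt : S.Nontrivial) {x : Fin n}
    (hx : x ∈ S) (hxn : x.val = n - 1) : ∃ y ∈ S, y.val = s := by
  have : Nontrivial S := Set.nontrivial_coe_sort.mpr hnt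
  obtain ⟨y, hy⟩ := hS.preconnected.exists_adj_of_nontrivial ⟨x, hx⟩
  simp only [comap_adj, Function.Embedding.subtype_apply, pathWithPendant_adj hs] at hy
  have := y.1.isLt
  exact ⟨y, y.2, by omega⟩

def pathWithPendant.height (s : ℕ) (x : Fin n) : ℕ := if x.val = n - 1 then s else x.val

theorem pathWithPendant.height_le_succ_of_adj (hs : s + 2 ≤ n) {u v : Fin n}
    (huv : (pathWithPendant n s).Adj u v) : height s v ≤ height s u + 1 := by
  rw [pathWithPendant_adj hs] at huv
  unfold height
  split_ifs <;> omega

theorem pathWithPendant.exists_interval_of_connected (hs : s + 2 ≤ n) {S : Set (Fin n)}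
    (hS : ((pathWithPendant n s).induce S).Connected) (hnt : S.Nontrivial) :
    ∃ a b, a ≤ b ∧ b ≤ n - 2 ∧
      (∀ x : Fin n, x.val ≠ n - 1 → (x ∈ S ↔ a ≤ x.val ∧ x.val ≤ b)) ∧
      (∀ x ∈ S, x.val = n - 1 → a ≤ s ∧ s ≤ b) := by
  obtain ⟨x₀, hx₀, hmin⟩ := S.exists_min_image (height s) S.toFinite hnt.nonempty
  obtain ⟨x₁, hx₁, hmax⟩ := S.exists_max_image (height s) S.toFinite hnt.nonempty
  have height_of_ne {x : Fin n} (hx : x.val ≠ n - 1) : height s x = x.val := if_neg hx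
  have height_of_eq {x : Fin n} (hx : x.val = n - 1) : height s x = s := if_pos hx
  have hivt {c : ℕ} (h₀ : height s x₀ ≤ c) (h₁ : c ≤ height s x₁) :
      ∃ z ∈ S, height s z = c := by
    obtain ⟨p⟩ := hS.preconnected ⟨x₀, hx₀⟩ ⟨x₁, hx₁⟩
    obtain ⟨z, -, hz⟩ := p.exists_mem_support_apply_eq (height s ∘ Subtype.val)
      (fun _ _ huv ↦ height_le_succ_of_adj hs huv) h₀ h₁
    exact ⟨z, z.2, hz⟩
  refine ⟨height s x₀, height s x₁, hmin x₁ hx₁, ?_, fun x hx ↦ ⟨fun h ↦ ?_, fun h ↦ ?_⟩,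
    fun x hxS hx ↦ ?_⟩
  · have := x₁.isLt
    by_cases hx₁n : x₁.val = n - 1
    · rw [height_of_eq hx₁n]; omega
    · rw [height_of_ne hx₁n]; omega
  · exact height_of_ne hx ▸ ⟨hmin x h, hmax x h⟩
  · obtain ⟨z, hz, hzx⟩ := hivt h.1 h.2
    by_cases hzn : z.val = n - 1
    · obtain ⟨y, hy, hys⟩ := exists_mem_val_eq_of_connected hs hS hnt hz hzn
      exact (Fin.ext (hys.trans (height_of_eq hzn ▸ hzx)) : y = x) ▸ hy
    · exact (Fin.ext (height_of_ne hzn ▸ hzx) : z = x) ▸ hz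
  · have h₀ := hmin x hxS
    have h₁ := hmax x hxS
    rw [height_of_eq hx] at h₀ h₁
    exact ⟨h₀, h₁⟩

theorem isDynkin_induce_pathWithPendant (hs : s + 2 ≤ n)
    (hdyn : min s (n - 2 - s) ≤ 1 ∨ (min s (n - 2 - s) = 2 ∧ n ≤ 8)) {S : Set (Fin n)}
    (hS : ((pathWithPendant n s).induce S).Connected) :
    IsDynkin ((pathWithPendant n s).induce S) := by
  rcases S.subsingleton_or_nontrivial with hsub | hnt
  · have : Subsingleton S := hsub.coe_sort
    have : Nonempty S := hS.nonempty
    exact isDynkin_of_subsingleton _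
  obtain ⟨a, b, hab, hb, hspine, hpendant⟩ := pathWithPendant.exists_interval_of_connected hs hS hnt
  let ℓ : Fin n := ⟨n - 1, by omega⟩
  by_cases hℓ : ℓ ∈ S
  · obtain ⟨has, hsb⟩ := hpendant ℓ hℓ rfl
    have hsm : s + 2 ≤ a + (b + 2 - a) := by omega
    have hrange : Set.range (pathWithPendant.restrictEmbedding hs has hsm (by omega)) = S := by
      rw [pathWithPendant.range_restrictEmbedding]
      ext x
      by_cases hx : x.val = n - 1
      · simpa [hx] using (Fin.ext hx : x = ℓ) ▸ hℓ
      · simp only [Set.mem_ofPred_eq, hx, false_or, hspine x hx]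
        omega
    rw [← hrange]
    exact IsDynkin.of_iso (Embedding.isoInduceRange _).symm
      (isDynkin_pathWithPendant (by omega) (by omega))
  · have hm : a + (b + 1 - a) < n := by omega
    have hrange : Set.range (pathWithPendant.spineEmbedding hs a hm) = S := by
      rw [pathWithPendant.range_spineEmbedding]
      ext x
      by_cases hx : x.val = n - 1
      · have : x ∉ S := (Fin.ext hx : x = ℓ) ▸ hℓ
        simp only [Set.mem_ofPred_eq, this, iff_false]
        omega
      · simp only [Set.mem_ofPred_eq, hspine x hx]
        omega
    rw [← hrange]
    exact Or.inl ⟨_, by omega, ⟨(Embedding.isoInduceRange _).symm⟩⟩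

end PathWithPendant

theorem isDynkin_induce_pathGraph {n : ℕ} (hn : 1 ≤ n) {S : Set (Fin n)}
    (hS : ((pathGraph n).induce S).Connected) : IsDynkin ((pathGraph n).induce S) := by
  obtain rfl | hn : n = 1 ∨ 2 ≤ n := by omega
  · have : Nonempty S := hS.nonempty
    exact isDynkin_of_subsingleton _
  rw [pathGraph_eq_pathWithPendant hn] at hS ⊢
  exact isDynkin_induce_pathWithPendant (by omega) (by omega) hS

theorem isDynkin_induce_of_iso {W W' : Type*} {H : SimpleGraph W} {H' : SimpleGraph W'}
    (he : Nonempty (H ≃g H'))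
    (hH' : ∀ {T : Set W'}, (H'.induce T).Connected → IsDynkin (H'.induce T))
    {S : Set W} (hS : (H.induce S).Connected) : IsDynkin (H.induce S) := by
  obtain ⟨e⟩ := he
  let e' : H.induce S ≃g H'.induce (e '' S) := ⟨e.toEquiv.image S, e.map_rel_iff⟩
  exact IsDynkin.of_iso e' (hH' (e'.connected_iff.mp hS))

theorem IsDynkin.induce {W : Type*} {H : SimpleGraph W} (h : IsDynkin H) {S : Set W}
    (hS : (H.induce S).Connected) : IsDynkin (H.induce S) := by
  rcases h with ⟨n, hn, e⟩ | ⟨n, hn, e⟩ | e | e | e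
  · exact isDynkin_induce_of_iso e (isDynkin_induce_pathGraph hn) hS
  · exact isDynkin_induce_of_iso e
      (isDynkin_induce_pathWithPendant (n := n) (s := 1) (by omega) (by omega)) hS
  · exact isDynkin_induce_of_iso e
      (isDynkin_induce_pathWithPendant (n := 6) (s := 2) (by omega) (by omega)) hS
  · exact isDynkin_induce_of_iso e
      (isDynkin_induce_pathWithPendant (n := 7) (s := 2) (by omega) (by omega)) hS
  · exact isDynkin_induce_of_iso e
      (isDynkin_induce_pathWithPendant (n := 8) (s := 2) (by omega) (by omega)) hS

theorem epsSubgraph_le {V : Type*} (G : SimpleGraph V) (ε : V → Bool) : epsSubgraph G ε ≤ G :=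
  fun _ _ h ↦ h.1

theorem epsSubgraph_eq_self {V : Type*} {G : SimpleGraph V} {ε : V → Bool}
    (hε : ∀ ⦃u v⦄, G.Adj u v → ε u ≠ ε v) : epsSubgraph G ε = G := by
  ext u v
  exact ⟨fun h ↦ h.1, fun h ↦ ⟨h, hε h⟩⟩

theorem induce_supp_epsSubgraph {V : Type*} {G : SimpleGraph V} (hG : G.IsAcyclic) (ε : V → Bool)
    (c : (epsSubgraph G ε).ConnectedComponent) :
    (epsSubgraph G ε).induce c.supp = G.induce c.supp := by
  ext u v
  exact ⟨fun h ↦ h.1, fun h ↦ hG.adj_of_le_of_reachable (epsSubgraph_le G ε) h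
    (c.reachable_of_mem_supp u.2 v.2)⟩

theorem stmt3_general {V : Type*} (G : SimpleGraph V) (hG : G.IsTree) :
    (∀ ε : V → Bool, ∀ c : (epsSubgraph G ε).ConnectedComponent,
      IsDynkin ((epsSubgraph G ε).induce c.supp)) ↔ IsDynkin G := by
  constructor
  · intro h
    obtain ⟨C⟩ := hG.colorable_two
    let ε : V → Bool := finTwoEquiv ∘ C
    have hε : ∀ ⦃u v⦄, G.Adj u v → ε u ≠ ε v :=
      fun _ _ huv ↦ finTwoEquiv.injective.ne (C.valid huv)
    obtain ⟨r⟩ := hG.connected.nonempty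
    have hr := h ε ((epsSubgraph G ε).connectedComponentMk r)
    have hsupp : (G.connectedComponentMk r).supp = Set.univ :=
      Set.eq_univ_of_forall fun v ↦ ConnectedComponent.sound (hG.connected.preconnected v r)
    rw [epsSubgraph_eq_self hε, hsupp] at hr
    exact IsDynkin.of_iso (induceUnivIso G).symm hr
  · intro h ε c
    have hc : ((epsSubgraph G ε).induce c.supp).Connected := c.connected_toSimpleGraph
    rw [induce_supp_epsSubgraph hG.isAcyclic] at hc ⊢
    exact h.induce hc

theorem stmt3 {V : Type*} [Fintype V] (G : SimpleGraph V) (hG : G.IsTree) :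
    (∀ ε : V → Bool, ∀ c : (epsSubgraph G ε).ConnectedComponent,
      IsDynkin ((epsSubgraph G ε).induce c.supp)) ↔ IsDynkin G :=
  stmt3_general G hG
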